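/- arXiv:1107.1594 — 10 statements merged into one kernel-verified Lean document; each statement's English description precedes it below -/
import Mathlib

section
/- Let a_1, a_2, a_3, a_4, a_5 > 0 satisfy a_2 > a_5 and 2·a_1·a_2 < a_3·(a_2 − a_5). Define v[u] = a_4·u·(a_2+u)/((a_5+u)·(a_1·a_2 + a_3·u)). Then v has a unique positive critical point u_0, given explicitly by u_0 = a_1·a_2·a_5/(a_3·(a_2−a_5) − a_1·a_2) + a_2·√(a_1·a_5)·√((a_3−a_1)·(a_2−a_5))/(a_3·(a_2−a_5) − a_1·a_2), and v'[u] < 0 for all u > u_0. -/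
/-!
Up to the positive factor `a₄ / ((a₅ + u) (a₁ a₂ + a₃ u))²`, `v'(u)` is the downward parabola
`q(u) = -A u² + 2 a₁ a₂ a₅ u + a₁ a₂² a₅` with `A = a₃ (a₂ - a₅) - a₁ a₂ > 0`. Since `q(0) > 0`, its roots
have opposite signs, so `q` has exactly one positive root `u₀` and is negative beyond it. The discriminant
factors as `4 a₁ a₂² a₅ (a₃ - a₁)(a₂ - a₅)`, which gives the closed form of `u₀`.
-/

section DownwardParabola

variable {A B C s : ℝ}

theorem neg_quadratic_eq_mul_sub_roots (hA : A ≠ 0) (hsq : s ^ 2 = B ^ 2 + 4 * A * C) (x : ℝ) :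
    -A * x ^ 2 + B * x + C = -A * (x - (B + s) / (2 * A)) * (x - (B - s) / (2 * A)) := by
  field_simp
  linear_combination -hsq

variable (hA : 0 < A) (hC : 0 < C) (hs : 0 ≤ s) (hsq : s ^ 2 = B ^ 2 + 4 * A * C)
include hA hC hs hsq

theorem abs_lt_of_sq_eq_discrim : |B| < s :=
  abs_lt.2 (abs_lt_of_sq_lt_sq' (by nlinarith) hs)

theorem neg_quadratic_larger_root_pos : 0 < (B + s) / (2 * A) :=
  div_pos (by linarith [(abs_lt.1 (abs_lt_of_sq_eq_discrim hA hC hs hsq)).1]) (by positivity)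

theorem neg_quadratic_smaller_root_neg : (B - s) / (2 * A) < 0 :=
  div_neg_of_neg_of_pos (by linarith [(abs_lt.1 (abs_lt_of_sq_eq_discrim hA hC hs hsq)).2])
    (by positivity)

theorem eq_of_neg_quadratic_eq_zero {x : ℝ} (hx : 0 < x) (hq : -A * x ^ 2 + B * x + C = 0) :
    x = (B + s) / (2 * A) := by
  rw [neg_quadratic_eq_mul_sub_roots hA.ne' hsq] at hq
  have hx₁ : x - (B - s) / (2 * A) ≠ 0 := by
    linarith [neg_quadratic_smaller_root_neg hA hC hs hsq]
  simpa [hA.ne', hx₁, sub_eq_zero] using hq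

theorem neg_quadratic_neg_of_lt {x : ℝ} (hx : (B + s) / (2 * A) < x) :
    -A * x ^ 2 + B * x + C < 0 := by
  rw [neg_quadratic_eq_mul_sub_roots hA.ne' hsq]
  have hx₁ : 0 < x - (B - s) / (2 * A) := by
    linarith [neg_quadratic_smaller_root_neg hA hC hs hsq,
      neg_quadratic_larger_root_pos hA hC hs hsq]
  exact mul_neg_of_neg_of_pos (mul_neg_of_neg_of_pos (by linarith) (by linarith)) hx₁

end DownwardParabola

theorem hasDerivAt_quadratic_div_quadratic (a1 a2 a3 a4 a5 : ℝ) {u : ℝ}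
    (hu : (a5 + u) * (a1 * a2 + a3 * u) ≠ 0) :
    HasDerivAt (fun s : ℝ => a4 * s * (a2 + s) / ((a5 + s) * (a1 * a2 + a3 * s)))
      (a4 * (-(a3 * (a2 - a5) - a1 * a2) * u ^ 2 + 2 * a1 * a2 * a5 * u + a1 * a2 ^ 2 * a5)
        / ((a5 + u) * (a1 * a2 + a3 * u)) ^ 2) u := by
  have hnum : HasDerivAt (fun s : ℝ => a4 * s * (a2 + s)) (a4 * 1 * (a2 + u) + a4 * u * 1) u :=
    ((hasDerivAt_id' u).const_mul a4).mul ((hasDerivAt_id' u).const_add a2)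
  have hden : HasDerivAt (fun s : ℝ => (a5 + s) * (a1 * a2 + a3 * s))
      (1 * (a1 * a2 + a3 * u) + (a5 + u) * (a3 * 1)) u :=
    ((hasDerivAt_id' u).const_add a5).mul (((hasDerivAt_id' u).const_mul a3).const_add (a1 * a2))
  exact (hnum.div hden hu).congr_deriv (by ring)

theorem stmt_1 (a1 a2 a3 a4 a5 : ℝ) (h1 : 0 < a1) (h2 : 0 < a2) (h3 : 0 < a3)
    (h4 : 0 < a4) (h5 : 0 < a5) (h25 : a5 < a2)
    (hcd : 2 * a1 * a2 < a3 * (a2 - a5)) :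
    ∃ u0 : ℝ,
      u0 = a1 * a2 * a5 / (a3 * (a2 - a5) - a1 * a2)
          + a2 * Real.sqrt (a1 * a5) * Real.sqrt ((a3 - a1) * (a2 - a5))
            / (a3 * (a2 - a5) - a1 * a2) ∧
      0 < u0 ∧
      deriv (fun s : ℝ => a4 * s * (a2 + s) / ((a5 + s) * (a1 * a2 + a3 * s))) u0 = 0 ∧
      (∀ u : ℝ, 0 < u →
        deriv (fun s : ℝ => a4 * s * (a2 + s) / ((a5 + s) * (a1 * a2 + a3 * s))) u = 0 →
        u = u0) ∧
      (∀ u : ℝ, u0 < u →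
        deriv (fun s : ℝ => a4 * s * (a2 + s) / ((a5 + s) * (a1 * a2 + a3 * s))) u < 0) := by
  set A := a3 * (a2 - a5) - a1 * a2
  have hA : 0 < A := by nlinarith
  have hC : 0 < a1 * a2 ^ 2 * a5 := by positivity
  set s := 2 * a2 * (Real.sqrt (a1 * a5) * Real.sqrt ((a3 - a1) * (a2 - a5)))
  have hs : 0 ≤ s := by positivity
  have hsq : s ^ 2 = (2 * a1 * a2 * a5) ^ 2 + 4 * A * (a1 * a2 ^ 2 * a5) := by
    have ha31 : a1 < a3 := by nlinarith
    simp only [s, mul_pow]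
    rw [Real.sq_sqrt (by positivity),
      Real.sq_sqrt (mul_nonneg (by linarith) (by linarith))]
    ring
  have hderiv : ∀ u, 0 < u →
      deriv (fun s : ℝ => a4 * s * (a2 + s) / ((a5 + s) * (a1 * a2 + a3 * s))) u
        = a4 * (-A * u ^ 2 + 2 * a1 * a2 * a5 * u + a1 * a2 ^ 2 * a5)
          / ((a5 + u) * (a1 * a2 + a3 * u)) ^ 2 := fun u hu =>
    (hasDerivAt_quadratic_div_quadratic a1 a2 a3 a4 a5 (by positivity)).deriv
  have hroot := neg_quadratic_larger_root_pos hA hC hs hsq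
  refine ⟨_, ?_, hroot, ?_, fun u hu hdu => ?_, fun u hu => ?_⟩
  · field_simp
    ring
  · rw [hderiv _ hroot, neg_quadratic_eq_mul_sub_roots hA.ne' hsq]
    simp
  · rw [hderiv u hu] at hdu
    refine eq_of_neg_quadratic_eq_zero hA hC hs hsq hu ?_
    simpa [h4.ne', (by positivity : (a5 + u) * (a1 * a2 + a3 * u) ≠ 0)] using hdu
  · have hu₀ : 0 < u := hroot.trans hu
    rw [hderiv u hu₀]
    exact div_neg_of_neg_of_pos
      (mul_neg_of_pos_of_neg h4 (neg_quadratic_neg_of_lt hA hC hs hsq hu)) (by positivity)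
end

section
/- Under the assumptions a_2 > a_5 and 2·a_1·a_2 < a_3·(a_2 − a_5), the maximum value v_0 = v[u_0] of v[u] = a_4·u·(a_2+u)/((a_5+u)·(a_1·a_2 + a_3·u)) at its unique positive critical point u_0 equals a_4·(a_2 + 2u_0)/(a_1·a_2 + a_3·(a_5 + 2u_0)) and satisfies a_4·a_5/(a_1·a_2 + a_3·a_5) ≤ v_0 ≤ a_2·a_4/(a_1·a_2 + a_3·a_5). In particular v_0 ≤ a_2·a_4/(a_3·a_5) and v_0 ≥ a_4·a_5/(a_3·a_2). -/
theorem stmt_3 (a1 a2 a3 a4 a5 u0 : ℝ) (h1 : 0 < a1) (h2 : 0 < a2) (h3 : 0 < a3)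
    (h4 : 0 < a4) (h5 : 0 < a5) (h25 : a5 < a2)
    (hcd : 2 * a1 * a2 < a3 * (a2 - a5))
    (hu0 : u0 = a1 * a2 * a5 / (a3 * (a2 - a5) - a1 * a2)
          + a2 * Real.sqrt (a1 * a5) * Real.sqrt ((a3 - a1) * (a2 - a5))
            / (a3 * (a2 - a5) - a1 * a2)) :
    a4 * u0 * (a2 + u0) / ((a5 + u0) * (a1 * a2 + a3 * u0))
        = a4 * (a2 + 2 * u0) / (a1 * a2 + a3 * (a5 + 2 * u0)) ∧
    a4 * a5 / (a1 * a2 + a3 * a5)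
        ≤ a4 * u0 * (a2 + u0) / ((a5 + u0) * (a1 * a2 + a3 * u0)) ∧
    a4 * u0 * (a2 + u0) / ((a5 + u0) * (a1 * a2 + a3 * u0))
        ≤ a2 * a4 / (a1 * a2 + a3 * a5) ∧
    a4 * u0 * (a2 + u0) / ((a5 + u0) * (a1 * a2 + a3 * u0)) ≤ a2 * a4 / (a3 * a5) ∧
    a4 * a5 / (a3 * a2)
        ≤ a4 * u0 * (a2 + u0) / ((a5 + u0) * (a1 * a2 + a3 * u0)) := by
  have hD : 0 < a3 * (a2 - a5) - a1 * a2 := by nlinarith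
  have h31 : a1 < a3 := by nlinarith
  set s1 := Real.sqrt (a1 * a5) with hs1def
  set s2 := Real.sqrt ((a3 - a1) * (a2 - a5)) with hs2def
  have hs1 : s1 ^ 2 = a1 * a5 := Real.sq_sqrt (by positivity)
  have hs2 : s2 ^ 2 = (a3 - a1) * (a2 - a5) := Real.sq_sqrt (by nlinarith)
  have hs1n : 0 ≤ s1 := Real.sqrt_nonneg _
  have hs2n : 0 ≤ s2 := Real.sqrt_nonneg _
  have hu0pos : 0 < u0 := by
    rw [hu0]
    have h1' : 0 < a1 * a2 * a5 / (a3 * (a2 - a5) - a1 * a2) := by positivity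
    have h2' : 0 ≤ a2 * s1 * s2 / (a3 * (a2 - a5) - a1 * a2) := by positivity
    linarith
  have hDne : a3 * (a2 - a5) - a1 * a2 ≠ 0 := ne_of_gt hD
  have hu : u0 * (a3 * (a2 - a5) - a1 * a2) = a1 * a2 * a5 + a2 * s1 * s2 := by
    rw [hu0]; field_simp
  have hQ : (a3 * (a2 - a5) - a1 * a2) * u0 ^ 2
      = 2 * a1 * a2 * a5 * u0 + a1 * a2 ^ 2 * a5 := by
    have h2' : (u0 * (a3 * (a2 - a5) - a1 * a2)) ^ 2
        = (a1 * a2 * a5 + a2 * s1 * s2) ^ 2 := by rw [hu]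
    apply mul_left_cancel₀ hDne
    linear_combination h2' + a2 ^ 2 * s2 ^ 2 * hs1 + a2 ^ 2 * (a1 * a5) * hs2
      - (2 * a1 * a2 * a5) * hu
  have hden1 : 0 < (a5 + u0) * (a1 * a2 + a3 * u0) := by positivity
  have hden2 : 0 < a1 * a2 + a3 * (a5 + 2 * u0) := by positivity
  have hA : 0 < a1 * a2 + a3 * a5 := by positivity
  have heq : a4 * u0 * (a2 + u0) / ((a5 + u0) * (a1 * a2 + a3 * u0))
      = a4 * (a2 + 2 * u0) / (a1 * a2 + a3 * (a5 + 2 * u0)) := by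
    rw [div_eq_div_iff (ne_of_gt hden1) (ne_of_gt hden2)]
    linear_combination a4 * hQ
  refine ⟨heq, ?_, ?_, ?_, ?_⟩
  · rw [heq, div_le_div_iff₀ hA hden2]
    nlinarith [mul_pos h4 (mul_pos (mul_pos h1 h2) hu0pos),
      mul_pos (mul_pos h4 (mul_pos h1 h2)) (sub_pos.mpr h25),
      mul_pos (mul_pos h4 (mul_pos h3 h5)) (sub_pos.mpr h25)]
  · rw [heq, div_le_div_iff₀ hden2 hA]
    nlinarith [mul_pos (mul_pos h4 hu0pos) hD]
  · rw [heq, div_le_div_iff₀ hden2 (by positivity : (0:ℝ) < a3 * a5)]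
    nlinarith [mul_pos h4 (mul_pos h1 (mul_pos h2 h2)),
      mul_pos (mul_pos h4 (mul_pos h3 hu0pos)) (sub_pos.mpr h25)]
  · rw [heq, div_le_div_iff₀ (by positivity : (0:ℝ) < a3 * a2) hden2]
    nlinarith [mul_pos (mul_pos h4 (mul_pos h3 hu0pos)) (sub_pos.mpr h25),
      mul_pos h4 (mul_pos (mul_pos h1 h2) h5),
      mul_pos (mul_pos h4 (by linarith : (0:ℝ) < a2 + a5)) hD]
end

section
/- Consider the ODE system u' = γ·f(u,v), v' = γ·(−f(u,v) + q_0(u+v,v)) with f(u,v) = (a_1 + (a_3 − a_1)·u/(a_2+u))·v − a_4·u/(a_5+u) and q_0(w,v) = a_6·(V_0 − c·|Γ|·w)·max(1 − w, 0) − a_{−6}·v, all parameters positive, a_3 > a_1. Then the set A = {(u,v) : u ≥ 0, v ≥ 0, u + v ≤ min(1, m)}, m = V_0/(c·|Γ|), satisfies: f(0,v) ≥ 0 and −f(u,0) + q_0(u,0) ≥ 0 for all 0 ≤ u,v ≤ min(1,m), and f(u,v) + (−f(u,v) + q_0(u+v,v)) ≤ 0 whenever u,v ≥ 0 and u + v =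 min(1,m). Consequently A is forward invariant for the ODE system. -/
/-!
Measure how far `(u, v)` is from `A` by the penalty `P = (-u)⁺ + (-v)⁺ + (u + v - min 1 m)⁺`,
which vanishes exactly on `A`. Near each face of `A` the outward rate of the constraint violated
there is bounded by the penalty itself: across `u = 0` it is `-γ f ≤ γ a₃ (-v)⁺`, across `v = 0`
it is bounded by the violations of the other two constraints, and across `u + v = min 1 m` the
production term switches off, leaving `-γ a₋₆ v ≤ γ a₋₆ (-v)⁺`. These bounds need the uptake
coefficient to stay in `[0, a₃]` and `|a₄ u / (a₅ + u)| ≤ (2 a₄ / a₅) |u|`, which hold while `u`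
is above a fixed negative threshold, hence near every time at which `P = 0`. There the upper right
Dini derivative of `P` along a solution is at most `K P`, and Gronwall's inequality keeps `P` at
`0` forever after.
-/

open Set Filter Topology

def UpperRightDiniLE (F : ℝ → ℝ) (x B : ℝ) : Prop :=
  ∀ r, B < r → ∀ᶠ z in 𝓝[>] x, slope F x z < r

theorem UpperRightDiniLE.mono {F : ℝ → ℝ} {x B C : ℝ} (hF : UpperRightDiniLE F x B) (hBC : B ≤ C) :
    UpperRightDiniLE F x C :=
  fun r hr => hF r (hBC.trans_lt hr)

theorem UpperRightDiniLE.add {F G : ℝ → ℝ} {x B C : ℝ} (hF : UpperRightDiniLE F x B)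
    (hG : UpperRightDiniLE G x C) : UpperRightDiniLE (fun z => F z + G z) x (B + C) := by
  intro r hr
  filter_upwards [hF (B + (r - B - C) / 2) (by linarith), hG (C + (r - B - C) / 2) (by linarith)]
    with z hFz hGz
  have : slope (fun z => F z + G z) x z = slope F x z + slope G x z := by
    simp only [slope_def_field]
    ring
  linarith

theorem HasDerivAt.upperRightDiniLE_posPart {g : ℝ → ℝ} {d x B : ℝ} (hg : HasDerivAt g d x)
    (hB₀ : 0 ≤ B) (hB : 0 ≤ g x → d ≤ B) : UpperRightDiniLE (fun z => max (g z) 0) x B := by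
  intro r hr
  have hpos : ∀ᶠ z in 𝓝[>] x, 0 < z - x := eventually_nhdsWithin_of_forall fun z hz => sub_pos.2 hz
  rcases lt_or_ge (g x) 0 with hneg | hnonneg
  · filter_upwards [(hg.continuousAt.eventually_lt_const hneg).filter_mono nhdsWithin_le_nhds, hpos]
      with z hz hzx
    rw [slope_def_field, max_eq_right hz.le, max_eq_right hneg.le, sub_self, zero_div]
    linarith
  · filter_upwards [hg.hasDerivWithinAt.limsup_slope_le' (lt_irrefl x) ((hB hnonneg).trans_lt hr),
      hpos] with z hz hzx
    rw [slope_def_field, div_lt_iff₀ hzx] at hz ⊢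
    rw [max_eq_left hnonneg, sub_lt_iff_lt_add]
    exact max_lt (by linarith) (by nlinarith)

theorem eq_zero_of_upperRightDiniLE {F : ℝ → ℝ} {a K : ℝ} (hF : Continuous F) (hF₀ : ∀ x, 0 ≤ F x)
    (ha : F a = 0) (hloc : ∀ t, F t = 0 → ∀ᶠ x in 𝓝[≥] t, UpperRightDiniLE F x (K * F x))
    {t : ℝ} (ht : a ≤ t) : F t = 0 := by
  have hclosed : IsClosed (F ⁻¹' {0} ∩ Icc a t) :=
    (isClosed_singleton.preimage hF).inter isClosed_Icc
  refine hclosed.Icc_subset_of_forall_mem_nhdsWithin ha ?_ ⟨ht, le_rfl⟩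
  rintro x ⟨hx, -⟩
  obtain ⟨b, hxb, hb⟩ := mem_nhdsGE_iff_exists_Ico_subset.1 (hloc x hx)
  have hgronwall := le_gronwallBound_of_liminf_deriv_right_le (f' := fun y => K * F y)
    (δ := 0) (K := K) (ε := 0) hF.continuousOn
    (fun y hy r hr => ((hb hy) r hr).frequently.mono fun z hz => by
      rwa [slope_def_module, smul_eq_mul] at hz)
    hx.le (fun y _ => by simp)
  filter_upwards [Ico_mem_nhdsGT hxb] with y hy
  have := hgronwall y (Ico_subset_Icc_self hy)
  rw [gronwallBound_ε0_δ0] at this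
  exact le_antisymm this (hF₀ y)

noncomputable def uptake (a1 a2 a3 u : ℝ) : ℝ := a1 + (a3 - a1) * u / (a2 + u)

noncomputable def saturation (a4 a5 u : ℝ) : ℝ := a4 * u / (a5 + u)

/-- In the paper's notation `f = reaction` and `q₀(w, v) = production a₆ V₀ (c |Γ|) w - a₋₆ v`. -/
noncomputable def reaction (a1 a2 a3 a4 a5 u v : ℝ) : ℝ :=
  uptake a1 a2 a3 u * v - saturation a4 a5 u

def production (a6 V0 κ w : ℝ) : ℝ := a6 * (V0 - κ * w) * max (1 - w) 0

def exitPenalty (M u v : ℝ) : ℝ := max (-u) 0 + max (-v) 0 + max (u + v - M) 0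

section Rates

variable {a1 a2 a3 a4 a5 a6 V0 κ m u w : ℝ}

theorem uptake_nonneg (h3 : 0 < a3) (h2u : 0 < a2 + u) (hu : -(a1 * a2 / a3) ≤ u) :
    0 ≤ uptake a1 a2 a3 u := by
  have hnum : 0 ≤ a1 * a2 + a3 * u := by
    rw [neg_le, le_div_iff₀ h3] at hu
    linarith
  have : uptake a1 a2 a3 u = (a1 * a2 + a3 * u) / (a2 + u) := by
    unfold uptake
    field_simp
    ring
  rw [this]
  positivity

theorem uptake_le (h2 : 0 ≤ a2) (h2u : 0 < a2 + u) (h13 : a1 ≤ a3) : uptake a1 a2 a3 u ≤ a3 := by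
  have : (a3 - a1) * u / (a2 + u) ≤ a3 - a1 := by
    rw [div_le_iff₀ h2u]
    nlinarith
  unfold uptake
  linarith

theorem saturation_nonneg (h4 : 0 ≤ a4) (h5 : 0 ≤ a5) (hu : 0 ≤ u) : 0 ≤ saturation a4 a5 u := by
  unfold saturation
  positivity

theorem saturation_nonpos (h4 : 0 ≤ a4) (h5u : 0 < a5 + u) (hu : u ≤ 0) :
    saturation a4 a5 u ≤ 0 :=
  div_nonpos_of_nonpos_of_nonneg (mul_nonpos_of_nonneg_of_nonpos h4 hu) h5u.le

theorem neg_saturation_le (h4 : 0 ≤ a4) (h5 : 0 < a5) (hu : -(a5 / 2) ≤ u) :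
    -saturation a4 a5 u ≤ 2 * a4 / a5 * max (-u) 0 := by
  rcases le_total 0 u with hu₀ | hu₀
  · have := saturation_nonneg h4 h5.le hu₀
    have : 0 ≤ 2 * a4 / a5 * max (-u) 0 := by positivity
    linarith
  · rw [max_eq_left (neg_nonneg.2 hu₀), saturation, neg_div', div_le_iff₀ (by linarith),
      div_mul_eq_mul_div, div_mul_eq_mul_div, le_div_iff₀ h5]
    nlinarith [mul_nonneg (mul_nonneg h4 (neg_nonneg.2 hu₀)) (show 0 ≤ a5 + 2 * u by linarith)]

theorem production_eq (hκ : 0 < κ) (hm : m = V0 / κ) :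
    production a6 V0 κ w = a6 * κ * ((m - w) * max (1 - w) 0) := by
  rw [production, hm]
  field_simp

theorem production_nonneg (h6 : 0 ≤ a6) (hκ : 0 < κ) (hm : m = V0 / κ) (hw : w ≤ min 1 m) :
    0 ≤ production a6 V0 κ w := by
  rw [production_eq hκ hm]
  have : w ≤ m := hw.trans (min_le_right 1 m)
  have : 0 ≤ (m - w) * max (1 - w) 0 := mul_nonneg (by linarith) (le_max_right _ _)
  positivity

theorem production_nonpos (h6 : 0 ≤ a6) (hκ : 0 < κ) (hm : m = V0 / κ) (hw : min 1 m ≤ w) :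
    production a6 V0 κ w ≤ 0 := by
  rw [production_eq hκ hm]
  refine mul_nonpos_of_nonneg_of_nonpos (by positivity) ?_
  rcases le_total 1 m with h1m | hm1
  · rw [min_eq_left h1m] at hw
    rw [max_eq_right (by linarith), mul_zero]
  · rw [min_eq_right hm1] at hw
    exact mul_nonpos_of_nonpos_of_nonneg (by linarith) (le_max_right _ _)

theorem neg_production_le (h6 : 0 ≤ a6) (hκ : 0 < κ) (hV0 : 0 ≤ V0) (hm : m = V0 / κ) :
    -production a6 V0 κ w ≤ a6 * κ * max (w - min 1 m) 0 := by
  rw [production_eq hκ hm, ← mul_neg]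
  refine mul_le_mul_of_nonneg_left ?_ (by positivity)
  rcases le_total 1 w with h1w | hw1
  · rw [max_eq_right (by linarith : 1 - w ≤ 0)]
    simp
  rcases le_total w m with hwm | hmw
  · have : 0 ≤ (m - w) * max (1 - w) 0 := mul_nonneg (by linarith) (le_max_right _ _)
    linarith [le_max_right (w - min 1 m) 0]
  · rw [max_eq_left (by linarith : 0 ≤ 1 - w), min_eq_right (by linarith : m ≤ 1),
      max_eq_left (by linarith : 0 ≤ w - m)]
    have : 0 ≤ m := hm ▸ div_nonneg hV0 hκ.le
    nlinarith

end Rates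

theorem exitPenalty_nonneg {M u v : ℝ} : 0 ≤ exitPenalty M u v := by
  unfold exitPenalty
  positivity

theorem exitPenalty_eq_zero_iff {M u v : ℝ} :
    exitPenalty M u v = 0 ↔ 0 ≤ u ∧ 0 ≤ v ∧ u + v ≤ M := by
  have := le_max_left (-u) 0
  have := le_max_right (-u) 0
  have := le_max_left (-v) 0
  have := le_max_right (-v) 0
  have := le_max_left (u + v - M) 0
  have := le_max_right (u + v - M) 0
  constructor
  · intro h
    unfold exitPenalty at h
    refine ⟨?_, ?_, ?_⟩ <;> linarith
  · rintro ⟨hu, hv, huv⟩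
    rw [exitPenalty, max_eq_right (by linarith), max_eq_right (by linarith),
      max_eq_right (by linarith)]
    norm_num

section FaceBounds

variable {a1 a2 a3 a4 a5 a6 am6 γ V0 κ m u v : ℝ}

theorem neg_reaction_le_of_nonpos (h2 : 0 < a2) (h3 : 0 < a3) (h13 : a1 < a3) (h4 : 0 ≤ a4)
    (h5 : 0 < a5) (hγ : 0 ≤ γ) (hu2 : -a2 < u) (hu3 : -(a1 * a2 / a3) ≤ u) (hu5 : -(a5 / 2) ≤ u)
    (hu : u ≤ 0) :
    -(γ * reaction a1 a2 a3 a4 a5 u v) ≤ γ * (a3 * max (-v) 0) := by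
  have hk₀ := uptake_nonneg h3 (by linarith) hu3
  have hk₃ := uptake_le (u := u) h2.le (by linarith) h13.le
  have := saturation_nonpos (a5 := a5) h4 (by linarith) hu
  have : uptake a1 a2 a3 u * -v ≤ a3 * max (-v) 0 :=
    (mul_le_mul_of_nonneg_left (le_max_left _ _) hk₀).trans
      (mul_le_mul_of_nonneg_right hk₃ (le_max_right _ _))
  rw [← mul_neg, reaction]
  exact mul_le_mul_of_nonneg_left (by linarith) hγ

theorem neg_source_le_of_nonpos (h3 : 0 < a3) (h4 : 0 ≤ a4) (h5 : 0 < a5) (h6 : 0 ≤ a6)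
    (hm6 : 0 ≤ am6) (hγ : 0 ≤ γ) (hκ : 0 < κ) (hV0 : 0 ≤ V0) (hm : m = V0 / κ) (hu2 : -a2 < u)
    (hu3 : -(a1 * a2 / a3) ≤ u) (hu5 : -(a5 / 2) ≤ u) (hv : v ≤ 0) :
    -(γ * (-reaction a1 a2 a3 a4 a5 u v + (production a6 V0 κ (u + v) - am6 * v)))
      ≤ γ * (2 * a4 / a5 * max (-u) 0 + a6 * κ * max (u + v - min 1 m) 0) := by
  have := neg_saturation_le h4 h5 hu5
  have := neg_production_le (w := u + v) h6 hκ hV0 hm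
  have : uptake a1 a2 a3 u * v ≤ 0 :=
    mul_nonpos_of_nonneg_of_nonpos (uptake_nonneg h3 (by linarith) hu3) hv
  have : am6 * v ≤ 0 := mul_nonpos_of_nonneg_of_nonpos hm6 hv
  rw [← mul_neg, reaction]
  exact mul_le_mul_of_nonneg_left (by linarith) hγ

theorem total_rate_le_of_min_le (h6 : 0 ≤ a6) (hm6 : 0 ≤ am6) (hγ : 0 ≤ γ) (hκ : 0 < κ)
    (hm : m = V0 / κ) (hw : min 1 m ≤ u + v) :
    γ * reaction a1 a2 a3 a4 a5 u v
      + γ * (-reaction a1 a2 a3 a4 a5 u v + (production a6 V0 κ (u + v) - am6 * v))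
      ≤ γ * (am6 * max (-v) 0) := by
  have := production_nonpos h6 hκ hm hw
  have : -v * am6 ≤ max (-v) 0 * am6 := mul_le_mul_of_nonneg_right (le_max_left _ _) hm6
  rw [← mul_add]
  exact mul_le_mul_of_nonneg_left (by linarith) hγ

end FaceBounds

theorem upperRightDiniLE_exitPenalty {a1 a2 a3 a4 a5 a6 am6 γ V0 κ m : ℝ}
    (h2 : 0 < a2) (h3 : 0 < a3) (h13 : a1 < a3) (h4 : 0 ≤ a4) (h5 : 0 < a5) (h6 : 0 ≤ a6)
    (hm6 : 0 ≤ am6) (hγ : 0 ≤ γ) (hκ : 0 < κ) (hV0 : 0 ≤ V0) (hm : m = V0 / κ)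
    {u v : ℝ → ℝ} {x : ℝ}
    (hu : HasDerivAt u (γ * reaction a1 a2 a3 a4 a5 (u x) (v x)) x)
    (hv : HasDerivAt v (γ * (-reaction a1 a2 a3 a4 a5 (u x) (v x)
      + (production a6 V0 κ (u x + v x) - am6 * v x))) x)
    (hu2 : -a2 < u x) (hu3 : -(a1 * a2 / a3) ≤ u x) (hu5 : -(a5 / 2) ≤ u x) :
    UpperRightDiniLE (fun t => exitPenalty (min 1 m) (u t) (v t)) x
      (γ * (a3 + 2 * a4 / a5 + a6 * κ + am6) * exitPenalty (min 1 m) (u x) (v x)) := by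
  refine ((((hu.neg.upperRightDiniLE_posPart (by positivity) fun h =>
      neg_reaction_le_of_nonpos h2 h3 h13 h4 h5 hγ hu2 hu3 hu5 (neg_nonneg.1 h)).add
    (hv.neg.upperRightDiniLE_posPart (by positivity) fun h =>
      neg_source_le_of_nonpos h3 h4 h5 h6 hm6 hγ hκ hV0 hm hu2 hu3 hu5 (neg_nonneg.1 h))).add
    (((hu.add hv).sub_const (min 1 m)).upperRightDiniLE_posPart (by positivity) fun h =>
      total_rate_le_of_min_le h6 hm6 hγ hκ hm (sub_nonneg.1 h))).mono ?_)
  set P := max (-u x) 0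
  set Q := max (-v x) 0
  set R := max (u x + v x - min 1 m) 0
  have : 0 ≤ γ * ((a3 + a6 * κ + am6) * P + (2 * a4 / a5 + a6 * κ) * Q
      + (2 * a4 / a5 + a3 + am6) * R) := by positivity
  simp only [exitPenalty]
  linarith

theorem stmt_5 (a1 a2 a3 a4 a5 a6 am6 γ V0 c Γ m : ℝ)
    (h1 : 0 < a1) (h2 : 0 < a2) (h3 : 0 < a3) (h4 : 0 < a4) (h5 : 0 < a5)
    (h6 : 0 < a6) (hm6 : 0 < am6) (hγ : 0 < γ) (hV0 : 0 < V0) (hc : 0 < c)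
    (hΓ : 0 < Γ) (h13 : a1 < a3) (hm : m = V0 / (c * Γ)) :
    (∀ u v : ℝ, 0 ≤ u → 0 ≤ v → u ≤ min 1 m → v ≤ min 1 m →
      0 ≤ (a1 + (a3 - a1) * 0 / (a2 + 0)) * v - a4 * 0 / (a5 + 0) ∧
      0 ≤ -((a1 + (a3 - a1) * u / (a2 + u)) * 0 - a4 * u / (a5 + u))
          + (a6 * (V0 - c * Γ * u) * max (1 - u) 0 - am6 * 0)) ∧
    (∀ u v : ℝ, 0 ≤ u → 0 ≤ v → u + v = min 1 m →
      ((a1 + (a3 - a1) * u / (a2 + u)) * v - a4 * u / (a5 + u))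
        + (-((a1 + (a3 - a1) * u / (a2 + u)) * v - a4 * u / (a5 + u))
            + (a6 * (V0 - c * Γ * (u + v)) * max (1 - (u + v)) 0 - am6 * v)) ≤ 0) ∧
    (∀ u v : ℝ → ℝ,
      (∀ t : ℝ, HasDerivAt u
        (γ * ((a1 + (a3 - a1) * u t / (a2 + u t)) * v t - a4 * u t / (a5 + u t))) t) →
      (∀ t : ℝ, HasDerivAt v
        (γ * (-((a1 + (a3 - a1) * u t / (a2 + u t)) * v t - a4 * u t / (a5 + u t))
            + (a6 * (V0 - c * Γ * (u t + v t)) * max (1 - (u t + v t)) 0 - am6 * v t))) t) →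
      (0 ≤ u 0 ∧ 0 ≤ v 0 ∧ u 0 + v 0 ≤ min 1 m) →
      ∀ t : ℝ, 0 ≤ t → 0 ≤ u t ∧ 0 ≤ v t ∧ u t + v t ≤ min 1 m) := by
  have hκ : 0 < c * Γ := mul_pos hc hΓ
  refine ⟨fun u v hu hv hum _ => ⟨by simpa using mul_nonneg h1.le hv, ?_⟩,
    fun u v _ hv huv => ?_, fun u v hu hv hinit t ht => ?_⟩
  · have := add_nonneg (saturation_nonneg h4.le h5.le hu) (production_nonneg h6.le hκ hm hum)
    rw [saturation, production] at this
    linarith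
  · have := production_nonpos (a6 := a6) h6.le hκ hm huv.ge
    rw [production] at this
    linarith [mul_nonneg hm6.le hv]
  · have hu_cont : Continuous u := continuous_iff_continuousAt.2 fun t => (hu t).continuousAt
    have hv_cont : Continuous v := continuous_iff_continuousAt.2 fun t => (hv t).continuousAt
    refine exitPenalty_eq_zero_iff.1 (eq_zero_of_upperRightDiniLE
      (K := γ * (a3 + 2 * a4 / a5 + a6 * (c * Γ) + am6)) (by unfold exitPenalty; fun_prop)
      (fun _ => exitPenalty_nonneg) (exitPenalty_eq_zero_iff.2 hinit) (fun s hs => ?_) ht)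
    have near : ∀ b < 0, ∀ᶠ x in 𝓝[≥] s, b < u x := fun b hb =>
      (hu_cont.continuousAt.tendsto.eventually_const_lt
        (hb.trans_le (exitPenalty_eq_zero_iff.1 hs).1)).filter_mono nhdsWithin_le_nhds
    filter_upwards [near _ (neg_neg_of_pos h2),
      near _ (neg_neg_of_pos (by positivity : 0 < a1 * a2 / a3)),
      near _ (neg_neg_of_pos (half_pos h5))] with x h2x h3x h5x
    exact upperRightDiniLE_exitPenalty h2 h3 h13 h4.le h5 h6.le hm6.le hγ.le hκ hV0.le hm
      (hu x) (hv x) h2x h3x.le h5x.le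
end

section
/- Let f(u,v) = (a_1 + (a_3−a_1)·u/(a_2+u))·v − a_4·u/(a_5+u) with positive parameters and a_1 < a_3. If u > 0 and v = a_4·u·(a_2+u)/((a_5+u)·(a_1·a_2+a_3·u)) (so that f(u,v)=0), then ∂f/∂u(u,v) = a_2·(a_3−a_1)·a_4·u/((a_2+u)·(a_5+u)·(a_1·a_2+a_3·u)) − a_4·a_5/(a_5+u)², and this quantity is bounded above by a_4·(a_2 − a_5)·u/((a_2+u)·(a_5+u)²). -/
theorem stmt_8 (a1 a2 a3 a4 a5 u v : ℝ) (h1 : 0 < a1) (h2 : 0 < a2) (h3 : 0 < a3)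
    (h4 : 0 < a4) (h5 : 0 < a5) (h13 : a1 < a3) (hu : 0 < u)
    (hv : v = a4 * u * (a2 + u) / ((a5 + u) * (a1 * a2 + a3 * u))) :
    deriv (fun s : ℝ => (a1 + (a3 - a1) * s / (a2 + s)) * v - a4 * s / (a5 + s)) u
        = a2 * (a3 - a1) * a4 * u / ((a2 + u) * (a5 + u) * (a1 * a2 + a3 * u))
          - a4 * a5 / (a5 + u) ^ 2 ∧
    a2 * (a3 - a1) * a4 * u / ((a2 + u) * (a5 + u) * (a1 * a2 + a3 * u))
        - a4 * a5 / (a5 + u) ^ 2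
      ≤ a4 * (a2 - a5) * u / ((a2 + u) * (a5 + u) ^ 2) := by
  have hA : a2 + u ≠ 0 := by positivity
  have hB : a5 + u ≠ 0 := by positivity
  have hC : (a1 * a2 + a3 * u) ≠ 0 := by positivity
  constructor
  · have hq1 : HasDerivAt (fun s : ℝ => (a3 - a1) * s / (a2 + s))
        (((a3 - a1) * 1 * (a2 + u) - (a3 - a1) * u * (0 + 1)) / (a2 + u) ^ 2) u :=
      HasDerivAt.div ((hasDerivAt_id u).const_mul _)
        ((hasDerivAt_const u a2).add (hasDerivAt_id u)) hA
    have hq2 : HasDerivAt (fun s : ℝ => a4 * s / (a5 + s))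
        ((a4 * 1 * (a5 + u) - a4 * u * (0 + 1)) / (a5 + u) ^ 2) u :=
      HasDerivAt.div ((hasDerivAt_id u).const_mul _)
        ((hasDerivAt_const u a5).add (hasDerivAt_id u)) hB
    have hfull : HasDerivAt (fun s : ℝ => (a1 + (a3 - a1) * s / (a2 + s)) * v - a4 * s / (a5 + s))
        ((0 + ((a3 - a1) * 1 * (a2 + u) - (a3 - a1) * u * (0 + 1)) / (a2 + u) ^ 2) * v
          - (a4 * 1 * (a5 + u) - a4 * u * (0 + 1)) / (a5 + u) ^ 2) u :=
      (((hasDerivAt_const u a1).add hq1).mul_const v).sub hq2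
    rw [hfull.deriv, hv]
    field_simp
    ring
  · rw [div_sub_div _ _ (by positivity : ((a2 + u) * (a5 + u) * (a1 * a2 + a3 * u)) ≠ (0:ℝ))
      (by positivity : ((a5 + u) ^ 2) ≠ (0:ℝ)), div_le_div_iff₀ (by positivity) (by positivity)]
    nlinarith [mul_pos (mul_pos (mul_pos (mul_pos h4 (add_pos h2 hu)) (pow_pos (add_pos h5 hu) 4)) h2)
      (add_pos (mul_pos h1 h2) (mul_pos h1 hu))]
end

section
/- Assume conditions (cdt:1)–(cdt:4) of the existence proposition, and additionally 2·a_4·(a_2 − a_5) < a_3·a_5² and a_{−6} < a_6·c·|Γ|·|1 − m|. Let (u_*, v_*) be the stationary point with u_* > u_0 from the existence proposition. Then at (u_*,v_*): ∂_u f > 0, ∂_v f > 0, ∂_u g_0 < 0, ∂_v g_0 < 0, and moreover ∂_u f + ∂_v g_0 < 0 and ∂_u f·∂_v g_0 − ∂_v f·∂_u g_0 > 0. In particular (u_*, v_*) is a linearly stable stationary point of the ODE system u' = γ f, v' = γ g_0, and the system is of activator–substrate-depletion type there. -/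
/-!
Write `f_u, f_v, g_u, g_v` for the partial derivatives at `(u_*, v_*)`. Since `g_0 = -f + q_0`,
`g_u = -f_u - K` and `g_v = -f_v - K - a_{-6}`, where `K = -q'` is the slope of the supply term at
`u_* + v_*`. Eliminating `v_*` with `f(u_*, v_*) = 0` gives `f_u = a_4 P(u_*) / D` with `D > 0` and
`P(u) = α u² - 2 a_1a_2a_5 u - a_1a_2²a_5` (with `α = a_3(a_2 - a_5) - a_1a_2`), whose larger root
is `u_0`; so `u_* > u_0` gives `f_u > 0`. The condition `2 a_4 (a_2 - a_5) < a_3 a_5²` gives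
`2 f_u < f_v` (as `P(u) < a_3(a_2 - a_5) u²`), the one on `a_{-6}` gives `a_{-6} < K`,
and then `tr = f_u - f_v - K - a_{-6} < 0` and `det = K (f_v - f_u) - a_{-6} f_u > (K - a_{-6}) f_u > 0`.
-/

lemma quadratic_pos_of_root_lt {α b c s u : ℝ} (hα : 0 < α) (hs : 0 ≤ s)
    (hs2 : s ^ 2 = b ^ 2 + α * c) (hu : (b + s) / α < u) :
    0 < α * u ^ 2 - 2 * b * u - c := by
  rw [div_lt_iff₀ hα] at hu
  have hfactor : α * (α * u ^ 2 - 2 * b * u - c) = (u * α - b - s) * (u * α - b + s) := by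
    linear_combination hs2
  have : 0 < α * (α * u ^ 2 - 2 * b * u - c) := hfactor ▸ mul_pos (by linarith) (by linarith)
  exact pos_of_mul_pos_right this hα.le

lemma trace_neg_and_det_pos {A B K δ : ℝ} (hA : 0 < A) (hAB : 2 * A < B) (hδ : 0 < δ)
    (hδK : δ < K) :
    0 < A ∧ 0 < B ∧ -A - K < 0 ∧ -B - K - δ < 0 ∧ A + (-B - K - δ) < 0 ∧
      0 < A * (-B - K - δ) - B * (-A - K) := by
  refine ⟨hA, by linarith, by linarith, by linarith, by linarith, ?_⟩
  nlinarith [mul_pos hA (sub_pos.mpr hδK), mul_pos (hδ.trans hδK) (by linarith : 0 < B - 2 * A)]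

lemma hasDerivAt_supply (a6 V0 κ w : ℝ) :
    HasDerivAt (fun x => a6 * (V0 - κ * x) * (1 - x))
      (-(a6 * (κ * (1 - w) + (V0 - κ * w)))) w := by
  have hid := hasDerivAt_id' w
  exact ((((hid.const_mul κ).const_sub V0).const_mul a6).mul (hid.const_sub 1)).congr_deriv
    (by ring)

lemma lt_supply_slope {a6 am6 V0 κ m w : ℝ} (h6 : 0 < a6) (hκ : 0 < κ) (hm : m = V0 / κ)
    (hw : w < min 1 m) (h : am6 < a6 * κ * |1 - m|) :
    am6 < a6 * (κ * (1 - w) + (V0 - κ * w)) := by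
  have hw1 : w < 1 := hw.trans_le (min_le_left _ _)
  have hwm : w < m := hw.trans_le (min_le_right _ _)
  have habs : |1 - m| ≤ (1 - w) + (m - w) := abs_le.mpr ⟨by linarith, by linarith⟩
  have hV0 : V0 = κ * m := by rw [hm]; field_simp
  calc am6 < a6 * κ * |1 - m| := h
    _ ≤ a6 * κ * ((1 - w) + (m - w)) := by gcongr
    _ = a6 * (κ * (1 - w) + (V0 - κ * w)) := by rw [hV0]; ring

section Reaction

variable {a1 a2 a3 a4 a5 u v : ℝ}

lemma pos_and_lt_of_lt_div_two_mul (h1 : 0 < a1) (h2 : 0 < a2) (h5 : 0 < a5)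
    (h25 : a5 < a2) (h : a1 < a3 * (a2 - a5) / (2 * a2)) :
    0 < a3 * (a2 - a5) - a1 * a2 ∧ a1 < a3 := by
  rw [lt_div_iff₀ (by positivity)] at h
  constructor
  · nlinarith [mul_pos h1 h2]
  · by_contra! h31
    nlinarith [mul_pos h1 h2, mul_pos h1 (sub_pos.mpr h25)]

lemma hasDerivAt_reaction_fst (v : ℝ) (h2 : a2 + u ≠ 0) (h5 : a5 + u ≠ 0) :
    HasDerivAt (fun s => (a1 + (a3 - a1) * s / (a2 + s)) * v - a4 * s / (a5 + s))
      ((a3 - a1) * a2 * v / (a2 + u) ^ 2 - a4 * a5 / (a5 + u) ^ 2) u := by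
  have hid := hasDerivAt_id' u
  refine ((((hid.const_mul (a3 - a1)).div (hid.const_add a2) h2).const_add a1).mul_const v).sub
    ((hid.const_mul a4).div (hid.const_add a5) h5) |>.congr_deriv ?_
  field_simp
  ring

lemma hasDerivAt_reaction_snd (u v : ℝ) :
    HasDerivAt (fun t => (a1 + (a3 - a1) * u / (a2 + u)) * t - a4 * u / (a5 + u))
      (a1 + (a3 - a1) * u / (a2 + u)) v :=
  (((hasDerivAt_id' v).const_mul _).sub_const _).congr_deriv (mul_one _)

lemma hasDerivAt_substrate_fst (a6 am6 V0 κ v : ℝ) (h2 : a2 + u ≠ 0) (h5 : a5 + u ≠ 0) :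
    HasDerivAt (fun s => -((a1 + (a3 - a1) * s / (a2 + s)) * v - a4 * s / (a5 + s))
        + (a6 * (V0 - κ * (s + v)) * (1 - (s + v)) - am6 * v))
      (-((a3 - a1) * a2 * v / (a2 + u) ^ 2 - a4 * a5 / (a5 + u) ^ 2)
        - a6 * (κ * (1 - (u + v)) + (V0 - κ * (u + v)))) u :=
  ((hasDerivAt_reaction_fst v h2 h5).neg.add
    (((hasDerivAt_supply a6 V0 κ (u + v)).comp_add_const u v).sub_const _)).congr_deriv
    (by ring)

lemma hasDerivAt_substrate_snd (a6 am6 V0 κ u v : ℝ) :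
    HasDerivAt (fun t => -((a1 + (a3 - a1) * u / (a2 + u)) * t - a4 * u / (a5 + u))
        + (a6 * (V0 - κ * (u + t)) * (1 - (u + t)) - am6 * t))
      (-(a1 + (a3 - a1) * u / (a2 + u))
        - a6 * (κ * (1 - (u + v)) + (V0 - κ * (u + v))) - am6) v :=
  ((hasDerivAt_reaction_snd u v).neg.add
    (((hasDerivAt_supply a6 V0 κ (u + v)).comp_const_add u v).sub
      ((hasDerivAt_id' v).const_mul am6))).congr_deriv (by ring)

lemma reaction_coeff_eq (h2 : a2 + u ≠ 0) :
    a1 + (a3 - a1) * u / (a2 + u) = (a1 * a2 + a3 * u) / (a2 + u) := by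
  field_simp
  ring

lemma reaction_fst_deriv_eq_of_reaction_eq_zero (h2 : a2 + u ≠ 0) (h5 : a5 + u ≠ 0)
    (h13 : a1 * a2 + a3 * u ≠ 0)
    (hf : (a1 + (a3 - a1) * u / (a2 + u)) * v - a4 * u / (a5 + u) = 0) :
    (a3 - a1) * a2 * v / (a2 + u) ^ 2 - a4 * a5 / (a5 + u) ^ 2 =
      a4 * ((a3 * (a2 - a5) - a1 * a2) * u ^ 2 - 2 * (a1 * a2 * a5) * u - a1 * a2 ^ 2 * a5) /
        ((a2 + u) * (a5 + u) ^ 2 * (a1 * a2 + a3 * u)) := by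
  rw [reaction_coeff_eq h2] at hf
  have hv : v = a4 * u * (a2 + u) / ((a5 + u) * (a1 * a2 + a3 * u)) := by
    field_simp at hf ⊢
    linear_combination hf
  rw [hv]
  field_simp
  ring

lemma reaction_quadratic_pos (h1 : 0 < a1) (h5 : 0 < a5) (h25 : a5 < a2) (h13 : a1 < a3)
    (hα : 0 < a3 * (a2 - a5) - a1 * a2)
    (hu : a1 * a2 * a5 / (a3 * (a2 - a5) - a1 * a2)
          + a2 * √(a1 * a5) * √((a3 - a1) * (a2 - a5)) / (a3 * (a2 - a5) - a1 * a2) < u) :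
    0 < (a3 * (a2 - a5) - a1 * a2) * u ^ 2 - 2 * (a1 * a2 * a5) * u - a1 * a2 ^ 2 * a5 := by
  have hsq : (a2 * √(a1 * a5) * √((a3 - a1) * (a2 - a5))) ^ 2 =
      (a1 * a2 * a5) ^ 2 + (a3 * (a2 - a5) - a1 * a2) * (a1 * a2 ^ 2 * a5) := by
    rw [mul_pow, mul_pow, Real.sq_sqrt (by positivity),
      Real.sq_sqrt (mul_nonneg (by linarith) (by linarith))]
    ring
  have := quadratic_pos_of_root_lt hα (by have := h5.trans h25; positivity) hsq
    (by rwa [add_div])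
  linarith

lemma reaction_fst_deriv_pos (h1 : 0 < a1) (h4 : 0 < a4) (h5 : 0 < a5) (h25 : a5 < a2)
    (h13 : a1 < a3) (hα : 0 < a3 * (a2 - a5) - a1 * a2)
    (hu : a1 * a2 * a5 / (a3 * (a2 - a5) - a1 * a2)
          + a2 * √(a1 * a5) * √((a3 - a1) * (a2 - a5)) / (a3 * (a2 - a5) - a1 * a2) < u)
    (hf : (a1 + (a3 - a1) * u / (a2 + u)) * v - a4 * u / (a5 + u) = 0) :
    0 < (a3 - a1) * a2 * v / (a2 + u) ^ 2 - a4 * a5 / (a5 + u) ^ 2 := by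
  have h2 : 0 < a2 := h5.trans h25
  have h3 : 0 < a3 := h1.trans h13
  have hP := reaction_quadratic_pos h1 h5 h25 h13 hα hu
  have hu_pos : 0 < u := lt_of_le_of_lt (by positivity) hu
  rw [reaction_fst_deriv_eq_of_reaction_eq_zero (by positivity) (by positivity) (by positivity) hf]
  exact div_pos (mul_pos h4 hP) (by positivity)

lemma two_mul_quadratic_lt (h1 : 0 < a1) (h2 : 0 < a2) (h3 : 0 < a3) (h4 : 0 < a4)
    (h5 : 0 < a5) (hu : 0 < u) (h45 : 2 * a4 * (a2 - a5) < a3 * a5 ^ 2) :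
    2 * a4 * ((a3 * (a2 - a5) - a1 * a2) * u ^ 2 - 2 * (a1 * a2 * a5) * u - a1 * a2 ^ 2 * a5)
      < ((a1 * a2 + a3 * u) * (a5 + u)) ^ 2 := by
  have hlead : 2 * a4 * ((a3 * (a2 - a5) - a1 * a2) * u ^ 2 - 2 * (a1 * a2 * a5) * u
      - a1 * a2 ^ 2 * a5) ≤ 2 * a4 * (a3 * (a2 - a5)) * u ^ 2 := by
    have : 0 ≤ a1 * a2 * u ^ 2 + 2 * (a1 * a2 * a5) * u + a1 * a2 ^ 2 * a5 := by positivity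
    nlinarith
  have hmid : 2 * a4 * (a3 * (a2 - a5)) * u ^ 2 < (a3 * a5 * u) ^ 2 := by
    nlinarith [mul_pos (sub_pos.mpr h45) (mul_pos h3 (mul_pos hu hu))]
  have hlast : a3 * a5 * u < (a1 * a2 + a3 * u) * (a5 + u) := by
    nlinarith [mul_pos (mul_pos h1 h2) (add_pos h5 hu), mul_pos h3 (mul_pos hu hu)]
  nlinarith [mul_pos (mul_pos h3 h5) hu]

lemma two_mul_reaction_fst_deriv_lt_snd (h1 : 0 < a1) (h2 : 0 < a2) (h3 : 0 < a3) (h4 : 0 < a4)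
    (h5 : 0 < a5) (hu : 0 < u) (h45 : 2 * a4 * (a2 - a5) < a3 * a5 ^ 2)
    (hf : (a1 + (a3 - a1) * u / (a2 + u)) * v - a4 * u / (a5 + u) = 0) :
    2 * ((a3 - a1) * a2 * v / (a2 + u) ^ 2 - a4 * a5 / (a5 + u) ^ 2) <
      a1 + (a3 - a1) * u / (a2 + u) := by
  have hW : 0 < a1 * a2 + a3 * u := by positivity
  rw [reaction_fst_deriv_eq_of_reaction_eq_zero (by positivity) (by positivity) hW.ne' hf,
    reaction_coeff_eq (by positivity), mul_div_assoc', div_lt_div_iff₀ (by positivity)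
    (by positivity)]
  have := two_mul_quadratic_lt h1 h2 h3 h4 h5 hu h45
  have hpos : 0 < (a2 + u) ^ 2 := by positivity
  nlinarith [mul_lt_mul_of_pos_left this hpos]

end Reaction

theorem stmt_9_general (a1 a2 a3 a4 a5 a6 am6 V0 c Γ m u0 us vs : ℝ)
    (h1 : 0 < a1) (h2 : 0 < a2) (h3 : 0 < a3) (h4 : 0 < a4) (h5 : 0 < a5)
    (h6 : 0 < a6) (hm6 : 0 < am6) (hc : 0 < c)
    (hΓ : 0 < Γ) (hm : m = V0 / (c * Γ))
    (cdt1 : a5 < a2)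
    (cdt4 : a1 < min (a3 * (a2 - a5) / (2 * a2))
      ((2 : ℝ) ^ (-8 : ℤ) * a3 ^ 2 * (a2 - a5) ^ 2 * (min m 1) ^ 2 / (a2 ^ 2 * a5)))
    (cdt5 : 2 * a4 * (a2 - a5) < a3 * a5 ^ 2)
    (cdt6 : am6 < a6 * c * Γ * |1 - m|)
    (hu0 : u0 = a1 * a2 * a5 / (a3 * (a2 - a5) - a1 * a2)
          + a2 * Real.sqrt (a1 * a5) * Real.sqrt ((a3 - a1) * (a2 - a5))
            / (a3 * (a2 - a5) - a1 * a2))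
    (hus : 0 < us) (hsum : us + vs < min 1 m) (hu0s : u0 < us)
    (hstat1 : (a1 + (a3 - a1) * us / (a2 + us)) * vs - a4 * us / (a5 + us) = 0) :
    0 < deriv (fun s : ℝ =>
        (a1 + (a3 - a1) * s / (a2 + s)) * vs - a4 * s / (a5 + s)) us ∧
    0 < deriv (fun t : ℝ =>
        (a1 + (a3 - a1) * us / (a2 + us)) * t - a4 * us / (a5 + us)) vs ∧
    deriv (fun s : ℝ =>
        -((a1 + (a3 - a1) * s / (a2 + s)) * vs - a4 * s / (a5 + s))
          + (a6 * (V0 - c * Γ * (s + vs)) * (1 - (s + vs)) - am6 * vs)) us < 0 ∧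
    deriv (fun t : ℝ =>
        -((a1 + (a3 - a1) * us / (a2 + us)) * t - a4 * us / (a5 + us))
          + (a6 * (V0 - c * Γ * (us + t)) * (1 - (us + t)) - am6 * t)) vs < 0 ∧
    deriv (fun s : ℝ =>
        (a1 + (a3 - a1) * s / (a2 + s)) * vs - a4 * s / (a5 + s)) us
      + deriv (fun t : ℝ =>
        -((a1 + (a3 - a1) * us / (a2 + us)) * t - a4 * us / (a5 + us))
          + (a6 * (V0 - c * Γ * (us + t)) * (1 - (us + t)) - am6 * t)) vs < 0 ∧
    0 < deriv (fun s : ℝ =>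
        (a1 + (a3 - a1) * s / (a2 + s)) * vs - a4 * s / (a5 + s)) us
      * deriv (fun t : ℝ =>
        -((a1 + (a3 - a1) * us / (a2 + us)) * t - a4 * us / (a5 + us))
          + (a6 * (V0 - c * Γ * (us + t)) * (1 - (us + t)) - am6 * t)) vs
      - deriv (fun t : ℝ =>
        (a1 + (a3 - a1) * us / (a2 + us)) * t - a4 * us / (a5 + us)) vs
      * deriv (fun s : ℝ =>
        -((a1 + (a3 - a1) * s / (a2 + s)) * vs - a4 * s / (a5 + s))
          + (a6 * (V0 - c * Γ * (s + vs)) * (1 - (s + vs)) - am6 * vs)) us := by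
  obtain ⟨hα, h13⟩ := pos_and_lt_of_lt_div_two_mul h1 h2 h5 cdt1 (cdt4.trans_le (min_le_left _ _))
  have he2 : a2 + us ≠ 0 := by positivity
  have he5 : a5 + us ≠ 0 := by positivity
  rw [(hasDerivAt_reaction_fst vs he2 he5).deriv, (hasDerivAt_reaction_snd us vs).deriv,
    (hasDerivAt_substrate_fst a6 am6 V0 (c * Γ) vs he2 he5).deriv,
    (hasDerivAt_substrate_snd a6 am6 V0 (c * Γ) us vs).deriv]
  refine trace_neg_and_det_pos ?_ ?_ hm6 ?_
  · exact reaction_fst_deriv_pos h1 h4 h5 cdt1 h13 hα (hu0 ▸ hu0s) hstat1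
  · exact two_mul_reaction_fst_deriv_lt_snd h1 h2 h3 h4 h5 hus cdt5 hstat1
  · exact lt_supply_slope h6 (mul_pos hc hΓ) hm hsum (by rwa [mul_assoc a6] at cdt6)

theorem stmt_9 (a1 a2 a3 a4 a5 a6 am6 γ V0 c Γ m u0 us vs : ℝ)
    (h1 : 0 < a1) (h2 : 0 < a2) (h3 : 0 < a3) (h4 : 0 < a4) (h5 : 0 < a5)
    (h6 : 0 < a6) (hm6 : 0 < am6) (hγ : 0 < γ) (hV0 : 0 < V0) (hc : 0 < c)
    (hΓ : 0 < Γ) (hm : m = V0 / (c * Γ))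
    (cdt1 : a5 < a2)
    (cdt2 : 4 * a2 * a4 < a3 * a5 * min m 1)
    (cdt3 : 4 * a4 * a5 * am6 < V0 * a2 * a3 * a6)
    (cdt4 : a1 < min (a3 * (a2 - a5) / (2 * a2))
      ((2 : ℝ) ^ (-8 : ℤ) * a3 ^ 2 * (a2 - a5) ^ 2 * (min m 1) ^ 2 / (a2 ^ 2 * a5)))
    (cdt5 : 2 * a4 * (a2 - a5) < a3 * a5 ^ 2)
    (cdt6 : am6 < a6 * c * Γ * |1 - m|)
    (hu0 : u0 = a1 * a2 * a5 / (a3 * (a2 - a5) - a1 * a2)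
          + a2 * Real.sqrt (a1 * a5) * Real.sqrt ((a3 - a1) * (a2 - a5))
            / (a3 * (a2 - a5) - a1 * a2))
    (hus : 0 < us) (hvs : 0 < vs) (hsum : us + vs < min 1 m) (hu0s : u0 < us)
    (hstat1 : (a1 + (a3 - a1) * us / (a2 + us)) * vs - a4 * us / (a5 + us) = 0)
    (hstat2 : -((a1 + (a3 - a1) * us / (a2 + us)) * vs - a4 * us / (a5 + us))
        + (a6 * (V0 - c * Γ * (us + vs)) * (1 - (us + vs)) - am6 * vs) = 0) :
    0 < deriv (fun s : ℝ =>
        (a1 + (a3 - a1) * s / (a2 + s)) * vs - a4 * s / (a5 + s)) us ∧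
    0 < deriv (fun t : ℝ =>
        (a1 + (a3 - a1) * us / (a2 + us)) * t - a4 * us / (a5 + us)) vs ∧
    deriv (fun s : ℝ =>
        -((a1 + (a3 - a1) * s / (a2 + s)) * vs - a4 * s / (a5 + s))
          + (a6 * (V0 - c * Γ * (s + vs)) * (1 - (s + vs)) - am6 * vs)) us < 0 ∧
    deriv (fun t : ℝ =>
        -((a1 + (a3 - a1) * us / (a2 + us)) * t - a4 * us / (a5 + us))
          + (a6 * (V0 - c * Γ * (us + t)) * (1 - (us + t)) - am6 * t)) vs < 0 ∧
    deriv (fun s : ℝ =>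
        (a1 + (a3 - a1) * s / (a2 + s)) * vs - a4 * s / (a5 + s)) us
      + deriv (fun t : ℝ =>
        -((a1 + (a3 - a1) * us / (a2 + us)) * t - a4 * us / (a5 + us))
          + (a6 * (V0 - c * Γ * (us + t)) * (1 - (us + t)) - am6 * t)) vs < 0 ∧
    0 < deriv (fun s : ℝ =>
        (a1 + (a3 - a1) * s / (a2 + s)) * vs - a4 * s / (a5 + s)) us
      * deriv (fun t : ℝ =>
        -((a1 + (a3 - a1) * us / (a2 + us)) * t - a4 * us / (a5 + us))
          + (a6 * (V0 - c * Γ * (us + t)) * (1 - (us + t)) - am6 * t)) vs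
      - deriv (fun t : ℝ =>
        (a1 + (a3 - a1) * us / (a2 + us)) * t - a4 * us / (a5 + us)) vs
      * deriv (fun s : ℝ =>
        -((a1 + (a3 - a1) * s / (a2 + s)) * vs - a4 * s / (a5 + s))
          + (a6 * (V0 - c * Γ * (s + vs)) * (1 - (s + vs)) - am6 * vs)) us :=
  stmt_9_general a1 a2 a3 a4 a5 a6 am6 V0 c Γ m u0 us vs h1 h2 h3 h4 h5 h6 hm6 hc hΓ hm cdt1 cdt4
    cdt5 cdt6 hu0 hus hsum hu0s hstat1
end

section
/- Assume a_2 > a_5, 4·a_2·a_4 < a_3·a_5·min(1,m), a_{−6} < a_6·c·|Γ|·|1−m|, and a_1·a_2 < a_3/(1 + a_3²). Let (u_*, v_*) be the stationary point of the reduced model (with u_* > u_0, f(u_*,v_*) = 0 = g_0(u_*,v_*), u_*+v_* < min(1,m)). Then v_* < a_4·a_2/(a_3·a_5), u_* > (1/2)·min(1,m), and v_* > a_4·(a_2+1)·(a_3²+1)·min(1,m) / (2·(a_5+1)·(a_3²+2)·a_3). -/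
set_option maxHeartbeats 1000000 in
theorem stmt_12 (a1 a2 a3 a4 a5 a6 am6 V0 c Γ m u0 us vs : ℝ)
    (h1 : 0 < a1) (h2 : 0 < a2) (h3 : 0 < a3) (h4 : 0 < a4) (h5 : 0 < a5)
    (h6 : 0 < a6) (hm6 : 0 < am6) (hV0 : 0 < V0) (hc : 0 < c) (hΓ : 0 < Γ)
    (hm : m = V0 / (c * Γ))
    (cdt1 : a5 < a2)
    (cdt2 : 4 * a2 * a4 < a3 * a5 * min 1 m)
    (cdt6 : am6 < a6 * c * Γ * |1 - m|)
    (cdt7 : a1 * a2 < a3 / (1 + a3 ^ 2))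
    (hu0 : u0 = a1 * a2 * a5 / (a3 * (a2 - a5) - a1 * a2)
          + a2 * Real.sqrt (a1 * a5) * Real.sqrt ((a3 - a1) * (a2 - a5))
            / (a3 * (a2 - a5) - a1 * a2))
    (hus : 0 < us) (hvs : 0 < vs) (hsum : us + vs < min 1 m) (hu0s : u0 < us)
    (hstat1 : (a1 + (a3 - a1) * us / (a2 + us)) * vs - a4 * us / (a5 + us) = 0)
    (hstat2 : -((a1 + (a3 - a1) * us / (a2 + us)) * vs - a4 * us / (a5 + us))
        + (a6 * (V0 - c * Γ * (us + vs)) * (1 - (us + vs)) - am6 * vs) = 0) :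
    vs < a4 * a2 / (a3 * a5) ∧
    (1 / 2) * min 1 m < us ∧
    a4 * (a2 + 1) * (a3 ^ 2 + 1) * min 1 m / (2 * (a5 + 1) * (a3 ^ 2 + 2) * a3)
      < vs := by
  set M := min 1 m with hMdef
  have hM : 0 < M := lt_min one_pos (by rw [hm]; positivity)
  have hMle1 : M ≤ 1 := min_le_left _ _
  have h2u : 0 < a2 + us := by linarith
  have h5u : 0 < a5 + us := by linarith
  have h2u' : a2 + us ≠ 0 := ne_of_gt h2u
  have h5u' : a5 + us ≠ 0 := ne_of_gt h5u
  have hus1 : us < 1 := by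
    have : us + vs < 1 := lt_of_lt_of_le hsum hMle1
    linarith
  -- key algebraic equation from hstat1
  have key : vs * ((a1 * a2 + a3 * us) * (a5 + us)) = a4 * us * (a2 + us) := by
    field_simp at hstat1
    linarith [hstat1]
  -- key2 from hstat2
  have hV : V0 = c * Γ * m := by rw [hm]; field_simp
  have key2 : a6 * (c * Γ) * ((m - (us + vs)) * (1 - (us + vs))) = am6 * vs := by
    linear_combination hstat1 + hstat2 - a6 * (1 - (us + vs)) * hV
  have hcΓ : 0 < a6 * (c * Γ) := by positivity
  -- Part 1
  have t1 : us * (vs * a3 * (a5 + us)) < us * (a4 * (a2 + us)) := by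
    linarith [key, mul_pos (mul_pos hvs (mul_pos h1 h2)) h5u]
  have step1 : vs * a3 * (a5 + us) < a4 * (a2 + us) :=
    lt_of_mul_lt_mul_left t1 (le_of_lt hus)
  have t2 : (a5 + us) * (vs * (a3 * a5)) < (a5 + us) * (a4 * a2) := by
    linarith [mul_lt_mul_of_pos_left step1 h5,
      mul_pos (mul_pos h4 hus) (sub_pos.mpr cdt1)]
  have P1 : vs * (a3 * a5) < a4 * a2 := lt_of_mul_lt_mul_left t2 (le_of_lt h5u)
  have part1 : vs < a4 * a2 / (a3 * a5) := by
    rw [lt_div_iff₀ (by positivity)]; linarith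
  -- vs < M/4
  have hvsM : vs < M / 4 := by
    have h35 : 0 < a3 * a5 := mul_pos h3 h5
    have h4v : a3 * a5 * (4 * vs) < a3 * a5 * M := by nlinarith [P1, cdt2]
    have := lt_of_mul_lt_mul_left h4v (le_of_lt h35)
    linarith
  have hmne1 : m ≠ 1 := by
    intro h
    rw [h] at cdt6
    simp at cdt6
    linarith
  -- Part 2
  have part2 : M < 2 * us := by
    rcases le_or_gt m 1 with hm1 | hm1
    · have hmlt1 : m < 1 := lt_of_le_of_ne hm1 hmne1
      have hMeq : M = m := min_eq_right hm1
      have habs : |1 - m| = 1 - m := abs_of_nonneg (by linarith)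
      rw [habs] at cdt6
      have hsm : us + vs < m := by rw [← hMeq]; exact hsum
      have hmul := mul_lt_mul_of_pos_right cdt6 hvs
      have hfr : (m - (us + vs)) * (1 - (us + vs)) < (1 - m) * vs := by
        have : a6 * (c * Γ) * ((m - (us + vs)) * (1 - (us + vs)))
            < a6 * (c * Γ) * ((1 - m) * vs) := by
          rw [key2]; nlinarith [hmul]
        exact lt_of_mul_lt_mul_left this (le_of_lt hcΓ)
      have e1 : (1 - m) * (m - (us + vs)) < (1 - m) * vs := by
        nlinarith [hfr, mul_le_mul_of_nonneg_left
          (show 1 - m ≤ 1 - (us + vs) by linarith)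
          (show (0:ℝ) ≤ m - (us + vs) by linarith)]
      have e2 : m - (us + vs) < vs := lt_of_mul_lt_mul_left e1 (by linarith)
      have hvm : vs < m / 4 := by rw [← hMeq]; exact hvsM
      rw [hMeq]; linarith
    · have hMeq : M = 1 := min_eq_left (le_of_lt hm1)
      have habs : |1 - m| = m - 1 := by
        rw [abs_of_nonpos (by linarith)]; ring
      rw [habs] at cdt6
      have hs1 : us + vs < 1 := by rw [← hMeq]; exact hsum
      have hmul := mul_lt_mul_of_pos_right cdt6 hvs
      have hfr : (m - (us + vs)) * (1 - (us + vs)) < (m - 1) * vs := by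
        have : a6 * (c * Γ) * ((m - (us + vs)) * (1 - (us + vs)))
            < a6 * (c * Γ) * ((m - 1) * vs) := by
          rw [key2]; nlinarith [hmul]
        exact lt_of_mul_lt_mul_left this (le_of_lt hcΓ)
      have e1 : (m - 1) * (1 - (us + vs)) < (m - 1) * vs := by
        nlinarith [hfr, mul_le_mul_of_nonneg_right
          (show m - 1 ≤ m - (us + vs) by linarith)
          (show (0:ℝ) ≤ 1 - (us + vs) by linarith)]
      have e2 : 1 - (us + vs) < vs := lt_of_mul_lt_mul_left e1 (by linarith)
      have hvm : vs < 1 / 4 := by rw [← hMeq]; exact hvsM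
      rw [hMeq]; linarith
  -- Part 3
  have cdt7' : a1 * a2 * (1 + a3 ^ 2) < a3 := by
    rw [lt_div_iff₀ (by positivity)] at cdt7
    linarith
  have hD : 0 < (a1 * a2 + a3 * us) * (a5 + us) := by positivity
  have hden : 0 < 2 * (a5 + 1) * (a3 ^ 2 + 2) * a3 := by positivity
  have h_ab : (a2 + 1) * (a5 + us) ≤ (a5 + 1) * (a2 + us) := by nlinarith [cdt1, hus1]
  have h_cd : (a3 ^ 2 + 1) * M * (a1 * a2 + a3 * us) < 2 * (a3 ^ 2 + 2) * a3 * us := by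
    have A := mul_lt_mul_of_pos_left cdt7' hM
    have B := mul_lt_mul_of_pos_right part2 h3
    have C : 0 ≤ (1 - M) * ((a3 ^ 2 + 1) * (a3 * us)) :=
      mul_nonneg (sub_nonneg.mpr hMle1) (by positivity)
    have F : 0 ≤ (a3 ^ 2 + 1) * (a3 * us) := by positivity
    linarith [A, B, C, F]
  have big : (a2 + 1) * (a5 + us) * ((a3 ^ 2 + 1) * M * (a1 * a2 + a3 * us))
      < (a5 + 1) * (a2 + us) * (2 * (a3 ^ 2 + 2) * a3 * us) :=
    mul_lt_mul' h_ab h_cd (by positivity) (by positivity)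
  have part3 : a4 * (a2 + 1) * (a3 ^ 2 + 1) * M / (2 * (a5 + 1) * (a3 ^ 2 + 2) * a3) < vs := by
    rw [div_lt_iff₀ hden]
    have hbig2 := mul_lt_mul_of_pos_left big h4
    apply lt_of_mul_lt_mul_right _ (le_of_lt hD)
    calc a4 * (a2 + 1) * (a3 ^ 2 + 1) * M * ((a1 * a2 + a3 * us) * (a5 + us))
        = a4 * ((a2 + 1) * (a5 + us) * ((a3 ^ 2 + 1) * M * (a1 * a2 + a3 * us))) := by ring
      _ < a4 * ((a5 + 1) * (a2 + us) * (2 * (a3 ^ 2 + 2) * a3 * us)) := hbig2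
      _ = (2 * (a5 + 1) * (a3 ^ 2 + 2) * a3) * (a4 * us * (a2 + us)) := by ring
      _ = (2 * (a5 + 1) * (a3 ^ 2 + 2) * a3) * (vs * ((a1 * a2 + a3 * us) * (a5 + us))) := by
          rw [key]
      _ = vs * (2 * (a5 + 1) * (a3 ^ 2 + 2) * a3) * ((a1 * a2 + a3 * us) * (a5 + us)) := by ring
  exact ⟨part1, by linarith [part2], part3⟩
end

section
/- Let m > 0, a_6, a_{−6}, c, |Γ| > 0 with a_{−6} < a_6·c·|Γ|·|1−m|, and let v_1 = (1/4)·min(1,m). Let u_1 ∈ (0, min(1,m) − v_1) be the smaller root of a_6·c·|Γ|·(m − (u+v_1))·(1 − (u+v_1)) = a_{−6}·v_1, i.e. u_1 = (1/2)(m+1−2v_1) − √((1/4)(m+1−2v_1)² − (m−v_1)(1−v_1) + a_{−6}v_1/(a_6c|Γ|)). Then u_1 ≥ (1/2)·min(1,m). -/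
theorem stmt_13 (m a6 am6 c Γ v1 u1 : ℝ)
    (hm : 0 < m) (h6 : 0 < a6) (hm6 : 0 < am6) (hc : 0 < c) (hΓ : 0 < Γ)
    (hr : am6 < a6 * c * Γ * |1 - m|)
    (hv1 : v1 = (1 / 4) * min 1 m)
    (hu1 : u1 = (1 / 2) * (m + 1 - 2 * v1)
        - Real.sqrt ((1 / 4) * (m + 1 - 2 * v1) ^ 2 - (m - v1) * (1 - v1)
            + am6 * v1 / (a6 * c * Γ))) :
    (1 / 2) * min 1 m ≤ u1 := by
  have hμpos : 0 < min 1 m := lt_min one_pos hm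
  have hμ1 : min 1 m ≤ 1 := min_le_left _ _
  have hμm : min 1 m ≤ m := min_le_right _ _
  have hA : 0 < a6 * c * Γ := by positivity
  have hv1pos : 0 < v1 := by rw [hv1]; linarith
  have hK : am6 * v1 / (a6 * c * Γ) < |1 - m| * v1 := by
    rw [div_lt_iff₀ hA]; nlinarith
  have h1 : 0 ≤ (1/2) * (m + 1 - 2*v1) - (1/2) * min 1 m := by
    rw [hv1]; nlinarith
  have h2 : (1 / 4) * (m + 1 - 2 * v1) ^ 2 - (m - v1) * (1 - v1)
      + am6 * v1 / (a6 * c * Γ)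
      ≤ ((1/2) * (m + 1 - 2*v1) - (1/2) * min 1 m) ^ 2 := by
    rcases le_total m 1 with h | h
    · have hmin : min 1 m = m := min_eq_right h
      have habs : |1 - m| = 1 - m := abs_of_nonneg (by linarith)
      rw [habs] at hK
      rw [hmin]; rw [hmin] at hv1
      nlinarith
    · have hmin : min 1 m = 1 := min_eq_left h
      have habs : |1 - m| = m - 1 := by rw [abs_sub_comm]; exact abs_of_nonneg (by linarith)
      rw [habs] at hK
      rw [hmin]; rw [hmin] at hv1
      nlinarith
  have key := (Real.sqrt_le_sqrt h2).trans
    (le_of_eq (Real.sqrt_sq h1))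
  rw [hu1]; linarith
end

section
/- Let a_1,...,a_5 > 0 with a_2 > a_5, a_1·a_2 ≤ (a_3/(1+a_3²))·u for some u ∈ [(1/2)min(1,m), 1], and a_1·a_2·(1+a_2)² ≤ (a_3/(1+a_3²))·(a_2−a_5)·u². Then the derivative ∂_u f evaluated at (u, v[u]) satisfies ∂_u f(u, v[u]) = a_4·(a_3·(a_2−a_5)·u² − a_1·a_2·(2a_5u + u² + a_2a_5)) / ((a_2+u)(a_5+u)²(a_1a_2+a_3u)) ≥ a_4·a_3²·(a_2−a_5)·u / ((a_2+1)·(a_5+1)²·(a_3²+2)) ≥ a_4·a_3²·(a_2−a_5)·min(1,m) / (2·(a_2+1)·(a_5+1)²·(a_3²+2)). -/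
/-!
Differentiating the Holling-type terms gives
`∂ᵤf = (a₃ - a₁) a₂ v / (a₂ + u)² - a₄ a₅ / (a₅ + u)²`, and on the nullcline `v = v[u]` this is
`a₄ N(u) / D(u)` with `N(u) = a₃ (a₂ - a₅) u² - a₁ a₂ (2 a₅ u + u² + a₂ a₅)` and
`D(u) = (a₂ + u) (a₅ + u)² (a₁ a₂ + a₃ u)`. Writing `k = a₃ / (1 + a₃²)`, the two smallness
hypotheses on `a₁ a₂` give `N(u) ≥ (a₃ - k)(a₂ - a₅) u²` and `D(u) ≤ (a₂ + 1)(a₅ + 1)² (a₃ + k) u`,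
and `(a₃ - k) / (a₃ + k) = a₃² / (a₃² + 2)`.
-/

theorem hasDerivAt_mul_div_add (c b s : ℝ) (hs : b + s ≠ 0) :
    HasDerivAt (fun x => c * x / (b + x)) (c * b / (b + s) ^ 2) s :=
  (((hasDerivAt_id' s).const_mul c).fun_div ((hasDerivAt_id' s).const_add b) hs).congr_deriv
    (by ring)

theorem deriv_holling_mul_sub_holling (a1 a2 a3 a4 a5 v s : ℝ)
    (h2 : a2 + s ≠ 0) (h5 : a5 + s ≠ 0) :
    deriv (fun x : ℝ => (a1 + (a3 - a1) * x / (a2 + x)) * v - a4 * x / (a5 + x)) s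
      = (a3 - a1) * a2 / (a2 + s) ^ 2 * v - a4 * a5 / (a5 + s) ^ 2 :=
  ((((hasDerivAt_mul_div_add (a3 - a1) a2 s h2).const_add a1).mul_const v).sub
    (hasDerivAt_mul_div_add a4 a5 s h5)).deriv

section NullclineSlope

variable {a1 a2 a3 a4 a5 k u : ℝ}

theorem nullcline_numerator_lower_bound (h1 : 0 ≤ a1) (h2 : 0 ≤ a2) (h25 : a5 ≤ a2)
    (hu : 0 ≤ u) (huu : u ≤ 1) (hb : a1 * a2 * (1 + a2) ^ 2 ≤ k * (a2 - a5) * u ^ 2) :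
    (a3 - k) * (a2 - a5) * u ^ 2
      ≤ a3 * (a2 - a5) * u ^ 2 - a1 * a2 * (2 * a5 * u + u ^ 2 + a2 * a5) := by
  have hquad : 2 * a5 * u + u ^ 2 + a2 * a5 ≤ (1 + a2) ^ 2 := by
    nlinarith [mul_le_mul_of_nonneg_left h25 h2, mul_le_mul_of_nonneg_left h25 hu]
  nlinarith [mul_le_mul_of_nonneg_left hquad (mul_nonneg h1 h2)]

theorem nullcline_denominator_upper_bound (h2 : 0 ≤ a2) (h5 : 0 ≤ a5) (hu : 0 ≤ u)
    (huu : u ≤ 1) (hD : 0 ≤ a1 * a2 + a3 * u) (ha : a1 * a2 ≤ k * u) :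
    (a2 + u) * (a5 + u) ^ 2 * (a1 * a2 + a3 * u)
      ≤ (a2 + 1) * (a5 + 1) ^ 2 * ((a3 + k) * u) := by
  gcongr
  linarith

theorem nullcline_slope_lower_bound (h1 : 0 ≤ a1) (h2 : 0 ≤ a2) (h3 : 0 < a3) (h4 : 0 ≤ a4)
    (h5 : 0 ≤ a5) (h25 : a5 ≤ a2) (hu : 0 < u) (huu : u ≤ 1) (hk : k ≤ a3)
    (ha : a1 * a2 ≤ k * u) (hb : a1 * a2 * (1 + a2) ^ 2 ≤ k * (a2 - a5) * u ^ 2) :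
    a4 * (a3 - k) * (a2 - a5) * u / ((a2 + 1) * (a5 + 1) ^ 2 * (a3 + k))
      ≤ a4 * (a3 * (a2 - a5) * u ^ 2 - a1 * a2 * (2 * a5 * u + u ^ 2 + a2 * a5))
          / ((a2 + u) * (a5 + u) ^ 2 * (a1 * a2 + a3 * u)) := by
  have hN := nullcline_numerator_lower_bound (a3 := a3) h1 h2 h25 hu.le huu hb
  have hD : 0 < a1 * a2 + a3 * u := by positivity
  have hcancel : a4 * (a3 - k) * (a2 - a5) * u / ((a2 + 1) * (a5 + 1) ^ 2 * (a3 + k))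
      = a4 * ((a3 - k) * (a2 - a5) * u ^ 2) / ((a2 + 1) * (a5 + 1) ^ 2 * ((a3 + k) * u)) := by
    field_simp
  rw [hcancel]
  refine div_le_div₀ ?_ (mul_le_mul_of_nonneg_left hN h4) (by positivity)
    (nullcline_denominator_upper_bound h2 h5 hu.le huu hD.le ha)
  exact mul_nonneg h4 (le_trans
    (mul_nonneg (mul_nonneg (sub_nonneg.2 hk) (sub_nonneg.2 h25)) (sq_nonneg u)) hN)

end NullclineSlope

theorem stmt_14_general (a1 a2 a3 a4 a5 m u : ℝ)
    (h1 : 0 < a1) (h2 : 0 < a2) (h3 : 0 < a3) (h4 : 0 < a4) (h5 : 0 < a5)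
    (h25 : a5 < a2)
    (hul : (1 / 2) * min 1 m ≤ u) (huu : u ≤ 1) (hu : 0 < u)
    (h7a : a1 * a2 ≤ a3 / (1 + a3 ^ 2) * u)
    (h7b : a1 * a2 * (1 + a2) ^ 2 ≤ a3 / (1 + a3 ^ 2) * (a2 - a5) * u ^ 2) :
    deriv (fun s : ℝ =>
        (a1 + (a3 - a1) * s / (a2 + s))
            * (a4 * u * (a2 + u) / ((a5 + u) * (a1 * a2 + a3 * u)))
          - a4 * s / (a5 + s)) u
      = a4 * (a3 * (a2 - a5) * u ^ 2 - a1 * a2 * (2 * a5 * u + u ^ 2 + a2 * a5))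
          / ((a2 + u) * (a5 + u) ^ 2 * (a1 * a2 + a3 * u)) ∧
    a4 * a3 ^ 2 * (a2 - a5) * u / ((a2 + 1) * (a5 + 1) ^ 2 * (a3 ^ 2 + 2))
      ≤ a4 * (a3 * (a2 - a5) * u ^ 2 - a1 * a2 * (2 * a5 * u + u ^ 2 + a2 * a5))
          / ((a2 + u) * (a5 + u) ^ 2 * (a1 * a2 + a3 * u)) ∧
    a4 * a3 ^ 2 * (a2 - a5) * min 1 m / (2 * (a2 + 1) * (a5 + 1) ^ 2 * (a3 ^ 2 + 2))
      ≤ a4 * a3 ^ 2 * (a2 - a5) * u / ((a2 + 1) * (a5 + 1) ^ 2 * (a3 ^ 2 + 2)) := by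
  have hk : a3 / (1 + a3 ^ 2) ≤ a3 := div_le_self h3.le (le_add_of_nonneg_right (sq_nonneg a3))
  refine ⟨?_, ?_, ?_⟩
  · rw [deriv_holling_mul_sub_holling _ _ _ _ _ _ _ (by positivity) (by positivity)]
    field_simp
    ring
  · calc _ = a4 * (a3 - a3 / (1 + a3 ^ 2)) * (a2 - a5) * u
            / ((a2 + 1) * (a5 + 1) ^ 2 * (a3 + a3 / (1 + a3 ^ 2))) := by
          field_simp
          ring
      _ ≤ _ := nullcline_slope_lower_bound h1.le h2.le h3 h4.le h5.le h25.le hu huu hk h7a h7b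
  · have hmin : min 1 m ≤ 2 * u := by linarith
    calc _ ≤ a4 * a3 ^ 2 * (a2 - a5) * (2 * u) / (2 * (a2 + 1) * (a5 + 1) ^ 2 * (a3 ^ 2 + 2)) := by
          gcongr
      _ = _ := by
          field_simp

theorem stmt_14 (a1 a2 a3 a4 a5 m u : ℝ)
    (h1 : 0 < a1) (h2 : 0 < a2) (h3 : 0 < a3) (h4 : 0 < a4) (h5 : 0 < a5)
    (hm : 0 < m) (h25 : a5 < a2)
    (hul : (1 / 2) * min 1 m ≤ u) (huu : u ≤ 1) (hu : 0 < u)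
    (h7a : a1 * a2 ≤ a3 / (1 + a3 ^ 2) * u)
    (h7b : a1 * a2 * (1 + a2) ^ 2 ≤ a3 / (1 + a3 ^ 2) * (a2 - a5) * u ^ 2) :
    deriv (fun s : ℝ =>
        (a1 + (a3 - a1) * s / (a2 + s))
            * (a4 * u * (a2 + u) / ((a5 + u) * (a1 * a2 + a3 * u)))
          - a4 * s / (a5 + s)) u
      = a4 * (a3 * (a2 - a5) * u ^ 2 - a1 * a2 * (2 * a5 * u + u ^ 2 + a2 * a5))
          / ((a2 + u) * (a5 + u) ^ 2 * (a1 * a2 + a3 * u)) ∧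
    a4 * a3 ^ 2 * (a2 - a5) * u / ((a2 + 1) * (a5 + 1) ^ 2 * (a3 ^ 2 + 2))
      ≤ a4 * (a3 * (a2 - a5) * u ^ 2 - a1 * a2 * (2 * a5 * u + u ^ 2 + a2 * a5))
          / ((a2 + u) * (a5 + u) ^ 2 * (a1 * a2 + a3 * u)) ∧
    a4 * a3 ^ 2 * (a2 - a5) * min 1 m / (2 * (a2 + 1) * (a5 + 1) ^ 2 * (a3 ^ 2 + 2))
      ≤ a4 * a3 ^ 2 * (a2 - a5) * u / ((a2 + 1) * (a5 + 1) ^ 2 * (a3 ^ 2 + 2)) :=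
  stmt_14_general a1 a2 a3 a4 a5 m u h1 h2 h3 h4 h5 h25 hul huu hu h7a h7b
end

section
/- Theorem (no Turing instability for equal diffusion): Let f, q be C¹ functions with, at a point (u_*, v_*) and V_* = V_0 − c|Γ|(u_*+v_*): ∂_1 q ≤ 0, ∂_2 q ≤ 0, ∂_3 q ≥ 0 (all evaluated at (u_*+v_*, v_*, V_*)), ∂_u f > 0, ∂_v f > 0. Set A := ∂_1 q + ∂_3 q·V_0' with V_0' = −c|Γ| < 0, so A ≤ 0. Suppose the homogeneous-stability conditions hold: ∂_u f − ∂_v f + ∂_1 q + ∂_2 q + ∂_3 q·V_0' < 0 and ∂_u f·(∂_1 q + ∂_2 q + ∂_3 q·V_0') − ∂_v f·(∂_1 q + ∂_3 q·V_0') > 0. Then the heterogeneous-instability condition with equal diffusion, ∂_u f − ∂_v f + ∂_1 q + ∂_2 q > 0, cannot hold. -/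
/-!
Write `A = q1 - q3 c Γ ≤ 0` for the effective activator response of `q`. Since `q1, q2 ≤ 0`,
instability with equal diffusion forces `fu ≥ fv`; the determinant condition then reads
`(fu - fv) A + fu q2 > 0`, although both summands are nonpositive.
-/

lemma nonlocal_response_nonpos {q1 q3 c Γ : ℝ} (hq1 : q1 ≤ 0) (hq3 : 0 ≤ q3) (hc : 0 ≤ c)
    (hΓ : 0 ≤ Γ) : q1 + q3 * (-(c * Γ)) ≤ 0 := by
  nlinarith [mul_nonneg hq3 (mul_nonneg hc hΓ)]

lemma mul_add_sub_mul_nonpos {fu fv A q2 : ℝ} (hA : A ≤ 0) (hq2 : q2 ≤ 0) (hfu : 0 ≤ fu)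
    (hfv : fv ≤ fu) : fu * (A + q2) - fv * A ≤ 0 :=
  calc fu * (A + q2) - fv * A = (fu - fv) * A + fu * q2 := by ring
    _ ≤ 0 := add_nonpos (mul_nonpos_of_nonneg_of_nonpos (sub_nonneg.2 hfv) hA)
        (mul_nonpos_of_nonneg_of_nonpos hfu hq2)

theorem stmt_16_general (fu fv q1 q2 q3 c Γ : ℝ)
    (hq1 : q1 ≤ 0) (hq2 : q2 ≤ 0) (hq3 : 0 ≤ q3)
    (hfu : 0 < fu) (hc : 0 < c) (hΓ : 0 < Γ)
    (hstab2 : 0 < fu * (q1 + q2 + q3 * (-(c * Γ))) - fv * (q1 + q3 * (-(c * Γ)))) :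
    ¬ (0 < fu - fv + q1 + q2) := by
  intro hturing
  have hA := nonlocal_response_nonpos hq1 hq3 hc.le hΓ.le
  have hdet := mul_add_sub_mul_nonpos hA hq2 hfu.le (by linarith)
  have hsplit : q1 + q2 + q3 * (-(c * Γ)) = q1 + q3 * (-(c * Γ)) + q2 := by ring
  rw [hsplit] at hstab2
  linarith

theorem stmt_16 (fu fv q1 q2 q3 c Γ : ℝ)
    (hq1 : q1 ≤ 0) (hq2 : q2 ≤ 0) (hq3 : 0 ≤ q3)
    (hfu : 0 < fu) (hfv : 0 < fv) (hc : 0 < c) (hΓ : 0 < Γ)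
    (hstab1 : fu - fv + q1 + q2 + q3 * (-(c * Γ)) < 0)
    (hstab2 : 0 < fu * (q1 + q2 + q3 * (-(c * Γ))) - fv * (q1 + q3 * (-(c * Γ)))) :
    ¬ (0 < fu - fv + q1 + q2) :=
  stmt_16_general fu fv q1 q2 q3 c Γ hq1 hq2 hq3 hfu hc hΓ hstab2
end

section
/- Let a_1, a_2, a_3 > 0 with a_1·a_2 ≤ (a_3/(1+a_3²))·u for a given u with 0 < u ≤ 1. Then (a_1·a_2 + a_3·u)/(a_2 + u) ≤ a_3·(a_3² + 2)/((a_2 + 1)·(a_3² + 1)), i.e. the partial derivative ∂_v f(u,v) = a_1 + (a_3 − a_1)·u/(a_2 + u) of f(u,v) = (a_1 + (a_3−a_1)u/(a_2+u))v − a_4u/(a_5+u) satisfies ∂_v f(u,v) ≤ a_3·(a_3²+2)·u/((a_2+u)·(a_3²+1)) ≤ a_3·(a_3²+2)/((a_2+1)·(a_3²+1)). -/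
theorem stmt_19 (a1 a2 a3 a4 a5 u : ℝ)
    (h1 : 0 < a1) (h2 : 0 < a2) (h3 : 0 < a3) (h4 : 0 < a4) (h5 : 0 < a5)
    (h13 : a1 < a3) (hu : 0 < u) (hu1 : u ≤ 1)
    (h7 : a1 * a2 ≤ a3 / (1 + a3 ^ 2) * u) :
    (a1 * a2 + a3 * u) / (a2 + u) ≤ a3 * (a3 ^ 2 + 2) / ((a2 + 1) * (a3 ^ 2 + 1)) ∧
    (∀ v : ℝ, deriv (fun t : ℝ =>
        (a1 + (a3 - a1) * u / (a2 + u)) * t - a4 * u / (a5 + u)) v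
      = a1 + (a3 - a1) * u / (a2 + u)) ∧
    a1 + (a3 - a1) * u / (a2 + u)
      ≤ a3 * (a3 ^ 2 + 2) * u / ((a2 + u) * (a3 ^ 2 + 1)) ∧
    a3 * (a3 ^ 2 + 2) * u / ((a2 + u) * (a3 ^ 2 + 1))
      ≤ a3 * (a3 ^ 2 + 2) / ((a2 + 1) * (a3 ^ 2 + 1)) := by
  have hau : 0 < a2 + u := by linarith
  have ha3 : (0:ℝ) < 1 + a3 ^ 2 := by positivity
  have h7' : a1 * a2 * (1 + a3 ^ 2) ≤ a3 * u := by
    rw [div_mul_eq_mul_div, le_div_iff₀ ha3] at h7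
    linarith
  have key : (a1 * a2 + a3 * u) / (a2 + u) ≤
      a3 * (a3 ^ 2 + 2) * u / ((a2 + u) * (a3 ^ 2 + 1)) := by
    rw [div_le_div_iff₀ hau (by positivity)]
    nlinarith [h7', sq_nonneg a3, hau]
  have key2 : a3 * (a3 ^ 2 + 2) * u / ((a2 + u) * (a3 ^ 2 + 1)) ≤
      a3 * (a3 ^ 2 + 2) / ((a2 + 1) * (a3 ^ 2 + 1)) := by
    rw [div_le_div_iff₀ (by positivity) (by positivity)]
    have hle : u * (a2 + 1) ≤ a2 + u := by nlinarith
    nlinarith [mul_le_mul_of_nonneg_left hle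
      (show (0:ℝ) ≤ a3 * (a3 ^ 2 + 2) * (a3 ^ 2 + 1) by positivity)]
  refine ⟨key.trans key2, ?_, ?_, key2⟩
  · intro v
    simp [deriv_sub, deriv_const, mul_comm]
  · have : a1 + (a3 - a1) * u / (a2 + u) = (a1 * a2 + a3 * u) / (a2 + u) := by
      field_simp; ring
    rw [this]; exact key
end
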